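/- Let |ψ⟩ ∈ H_A ⊗ H_B. Suppose T₁, T₂ are Hermitian operators on H_B and U₁, U₂ are unitaries on H_A such that ‖T_j|ψ⟩ − U_j|ψ⟩‖ ≤ ε for j = 1, 2 (operators extended trivially across the tensor product). Then the regularized unitary operators T̂₁, T̂₂ satisfy ‖{T̂₁, T̂₂}|ψ⟩ − {T₁, T₂}|ψ⟩‖ ≤ (6 + ‖T₁‖ + ‖T₂‖)·ε, where {A, B} = AB + BA and ‖·‖ on operators is the operator norm. -/

import Mathlib

/-!
Conjugating by `1 ⊗ W`, where `W` diagonalizes `T`, fixes every `U ⊗ 1`, and turns `1 ⊗ T` and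
`1 ⊗ T̂` into operators acting on the slice `ψ_b` of `ψ` along the `b`-th eigenvector as the
scalars `λ_b` and `sign λ_b` (read as `1` when `λ_b = 0`), while `U ⊗ 1` acts on it as `U`.
Since `|sign λ - λ| ‖v‖ = ||λ| - 1| ‖v‖ ≤ ‖λ v - U v‖` for unitary `U`, summing over slices gives
`‖(T̂ - T)ψ‖ ≤ ‖(T - U)ψ‖ ≤ ε`. The anticommutator estimate then follows by telescoping
`T̂₁T̂₂ψ, T̂₁T₂ψ, T̂₁U₂ψ, U₂T₁ψ, T₁T₂ψ`: operators on different tensor factors commute and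
unitaries preserve norms, so only the last step costs the factor `‖T₁‖`.
-/

open scoped Kronecker

/-- The regularization `T̂` of a Hermitian operator `T`: in an eigenbasis of `T`, each nonzero
eigenvalue is replaced by its sign and each zero eigenvalue by `1`.  This agrees with the
definition `T̂ = (T + P)·|T + P|⁻¹`, where `P` is the orthogonal projection onto `ker T`. -/
noncomputable def regularize {d : ℕ} {T : Matrix (Fin d) (Fin d) ℂ} (hT : T.IsHermitian) :
    Matrix (Fin d) (Fin d) ℂ :=
  (hT.eigenvectorUnitary : Matrix (Fin d) (Fin d) ℂ) *
    Matrix.diagonal (fun i =>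
      if hT.eigenvalues i = 0 then 1 else ((Real.sign (hT.eigenvalues i) : ℝ) : ℂ)) *
    star (hT.eigenvectorUnitary : Matrix (Fin d) (Fin d) ℂ)

open Matrix

namespace ContinuousLinearMap

section Normed

variable {𝕜 E : Type*} [NontriviallyNormedField 𝕜] [SeminormedAddCommGroup E] [NormedSpace 𝕜 E]

theorem norm_mul_apply_sub_mul_apply_le {r₁ r₂ t₁ t₂ u : E →L[𝕜] E}
    (hr₁ : ∀ x, ‖r₁ x‖ = ‖x‖) (hu : ∀ x, ‖u x‖ = ‖x‖) (hr₁u : Commute r₁ u)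
    (ht₁u : Commute t₁ u) (ψ : E) :
    ‖(r₁ * r₂) ψ - (t₁ * t₂) ψ‖ ≤
      ‖r₁ ψ - t₁ ψ‖ + ‖r₂ ψ - t₂ ψ‖ + (1 + ‖t₁‖) * ‖t₂ ψ - u ψ‖ := by
  have hsplit : (r₁ * r₂) ψ - (t₁ * t₂) ψ =
      r₁ (r₂ ψ - t₂ ψ) + r₁ (t₂ ψ - u ψ) + u (r₁ ψ - t₁ ψ) + t₁ (u ψ - t₂ ψ) := by
    have hr : r₁ (u ψ) = u (r₁ ψ) := congr($(hr₁u.eq) ψ)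
    have ht : t₁ (u ψ) = u (t₁ ψ) := congr($(ht₁u.eq) ψ)
    simp only [mul_apply_eq_comp, map_sub, hr, ht]
    abel
  calc ‖(r₁ * r₂) ψ - (t₁ * t₂) ψ‖
      ≤ ‖r₁ (r₂ ψ - t₂ ψ)‖ + ‖r₁ (t₂ ψ - u ψ)‖ + ‖u (r₁ ψ - t₁ ψ)‖ + ‖t₁ (u ψ - t₂ ψ)‖ := by
        rw [hsplit]; exact norm_add₄_le
    _ ≤ ‖r₂ ψ - t₂ ψ‖ + ‖t₂ ψ - u ψ‖ + ‖r₁ ψ - t₁ ψ‖ + ‖t₁‖ * ‖t₂ ψ - u ψ‖ := by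
        rw [hr₁, hr₁, hu, ← norm_sub_rev (u ψ)]
        gcongr
        exact t₁.le_opNorm _
    _ = ‖r₁ ψ - t₁ ψ‖ + ‖r₂ ψ - t₂ ψ‖ + (1 + ‖t₁‖) * ‖t₂ ψ - u ψ‖ := by ring

theorem norm_anticommutator_apply_sub_le {r₁ r₂ t₁ t₂ u₁ u₂ : E →L[𝕜] E}
    (hr₁ : ∀ x, ‖r₁ x‖ = ‖x‖) (hr₂ : ∀ x, ‖r₂ x‖ = ‖x‖)
    (hu₁ : ∀ x, ‖u₁ x‖ = ‖x‖) (hu₂ : ∀ x, ‖u₂ x‖ = ‖x‖)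
    (hr₁u₂ : Commute r₁ u₂) (ht₁u₂ : Commute t₁ u₂) (hr₂u₁ : Commute r₂ u₁)
    (ht₂u₁ : Commute t₂ u₁) {ψ : E} {ε : ℝ} (hrt₁ : ‖r₁ ψ - t₁ ψ‖ ≤ ε)
    (hrt₂ : ‖r₂ ψ - t₂ ψ‖ ≤ ε) (htu₁ : ‖t₁ ψ - u₁ ψ‖ ≤ ε) (htu₂ : ‖t₂ ψ - u₂ ψ‖ ≤ ε) :
    ‖(r₁ * r₂ + r₂ * r₁) ψ - (t₁ * t₂ + t₂ * t₁) ψ‖ ≤ (6 + ‖t₁‖ + ‖t₂‖) * ε := by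
  have h₁₂ := norm_mul_apply_sub_mul_apply_le (r₂ := r₂) (t₂ := t₂) hr₁ hu₂ hr₁u₂ ht₁u₂ ψ
  have h₂₁ := norm_mul_apply_sub_mul_apply_le (r₂ := r₁) (t₂ := t₁) hr₂ hu₁ hr₂u₁ ht₂u₁ ψ
  calc ‖(r₁ * r₂ + r₂ * r₁) ψ - (t₁ * t₂ + t₂ * t₁) ψ‖
      ≤ ‖(r₁ * r₂) ψ - (t₁ * t₂) ψ‖ + ‖(r₂ * r₁) ψ - (t₂ * t₁) ψ‖ := by
        rw [_root_.add_apply, _root_.add_apply, add_sub_add_comm]; exact norm_add_le _ _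
    _ ≤ (ε + ε + (1 + ‖t₁‖) * ε) + (ε + ε + (1 + ‖t₂‖) * ε) :=
        add_le_add (h₁₂.trans (by gcongr)) (h₂₁.trans (by gcongr))
    _ = (6 + ‖t₁‖ + ‖t₂‖) * ε := by ring

end Normed

theorem norm_conj_apply_sub_conj_apply {𝕜 H : Type*} [RCLike 𝕜] [NormedAddCommGroup H]
    [InnerProductSpace 𝕜 H] [CompleteSpace H] {q : H →L[𝕜] H} (hq : q ∈ unitary (H →L[𝕜] H))
    (a b : H →L[𝕜] H) (ψ : H) :
    ‖(q * a * star q) ψ - (q * b * star q) ψ‖ = ‖a (star q ψ) - b (star q ψ)‖ := by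
  simp only [mul_apply_eq_comp]
  rw [← map_sub, norm_map_of_mem_unitary hq]

end ContinuousLinearMap

theorem abs_norm_sub_one_mul_norm_le {𝕜 E : Type*} [NormedField 𝕜] [SeminormedAddCommGroup E]
    [NormedSpace 𝕜 E] (c : 𝕜) {u v : E} (h : ‖u‖ = ‖v‖) :
    |‖c‖ - 1| * ‖v‖ ≤ ‖c • v - u‖ :=
  calc |‖c‖ - 1| * ‖v‖ = |‖c • v‖ - ‖u‖| := by
        rw [norm_smul, h, ← sub_one_mul, abs_mul, abs_of_nonneg (norm_nonneg v)]
    _ ≤ ‖c • v - u‖ := abs_norm_sub_norm_le _ _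

namespace Matrix

variable {R n m : Type*} [Fintype n] [Fintype m] [DecidableEq n]

theorem one_kronecker_mul [CommSemiring R] (A B : Matrix m m R) :
    (1 : Matrix n n R) ⊗ₖ (A * B) = ((1 : Matrix n n R) ⊗ₖ A) * ((1 : Matrix n n R) ⊗ₖ B) := by
  rw [← mul_kronecker_mul, one_mul]

variable [DecidableEq m]

theorem commute_one_kronecker_kronecker_one [CommSemiring R] (A : Matrix n n R)
    (B : Matrix m m R) : Commute ((1 : Matrix n n R) ⊗ₖ B) (A ⊗ₖ (1 : Matrix m m R)) := by
  rw [Commute, SemiconjBy, ← mul_kronecker_mul, ← mul_kronecker_mul, one_mul, mul_one, one_mul,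
    mul_one]

theorem kronecker_mem_unitaryGroup [CommRing R] [StarRing R] {A : Matrix n n R}
    {B : Matrix m m R} (hA : A ∈ unitaryGroup n R) (hB : B ∈ unitaryGroup m R) :
    A ⊗ₖ B ∈ unitaryGroup (n × m) R := by
  rw [mem_unitaryGroup_iff', star_eq_conjTranspose, conjTranspose_kronecker, ← mul_kronecker_mul,
    ← star_eq_conjTranspose, ← star_eq_conjTranspose, Unitary.star_mul_self_of_mem hA,
    Unitary.star_mul_self_of_mem hB, one_kronecker_one]

end Matrix

namespace EuclideanSpace

variable {𝕜 n m : Type*} [RCLike 𝕜]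

def rowSlice (x : EuclideanSpace 𝕜 (n × m)) (a : n) : EuclideanSpace 𝕜 m :=
  WithLp.toLp 2 fun b => x (a, b)

def colSlice (x : EuclideanSpace 𝕜 (n × m)) (b : m) : EuclideanSpace 𝕜 n :=
  WithLp.toLp 2 fun a => x (a, b)

theorem colSlice_sub (x y : EuclideanSpace 𝕜 (n × m)) (b : m) :
    colSlice (x - y) b = colSlice x b - colSlice y b := rfl

variable [Fintype n] [Fintype m]

theorem norm_sq_eq_sum_rowSlice (x : EuclideanSpace 𝕜 (n × m)) :
    ‖x‖ ^ 2 = ∑ a, ‖rowSlice x a‖ ^ 2 := by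
  simp only [norm_sq_eq, rowSlice, Fintype.sum_prod_type]

theorem norm_sq_eq_sum_colSlice (x : EuclideanSpace 𝕜 (n × m)) :
    ‖x‖ ^ 2 = ∑ b, ‖colSlice x b‖ ^ 2 := by
  simp only [norm_sq_eq, colSlice, Fintype.sum_prod_type]
  exact Finset.sum_comm

theorem norm_le_mul_of_rowSlice_le {x y : EuclideanSpace 𝕜 (n × m)} {c : ℝ} (hc : 0 ≤ c)
    (h : ∀ a, ‖rowSlice x a‖ ≤ c * ‖rowSlice y a‖) : ‖x‖ ≤ c * ‖y‖ := by
  refine le_of_sq_le_sq ?_ (by positivity)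
  rw [mul_pow, norm_sq_eq_sum_rowSlice, norm_sq_eq_sum_rowSlice, Finset.mul_sum]
  gcongr with a
  rw [← mul_pow]
  exact pow_le_pow_left₀ (norm_nonneg _) (h a) 2

theorem norm_le_of_colSlice_le {x y : EuclideanSpace 𝕜 (n × m)}
    (h : ∀ b, ‖colSlice x b‖ ≤ ‖colSlice y b‖) : ‖x‖ ≤ ‖y‖ := by
  refine le_of_sq_le_sq ?_ (norm_nonneg _)
  rw [norm_sq_eq_sum_colSlice, norm_sq_eq_sum_colSlice]
  gcongr with b
  exact h b

variable [DecidableEq n] [DecidableEq m]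

theorem rowSlice_one_kronecker_apply (B : Matrix m m 𝕜) (x : EuclideanSpace 𝕜 (n × m)) (a : n) :
    rowSlice (toEuclideanCLM (𝕜 := 𝕜) ((1 : Matrix n n 𝕜) ⊗ₖ B) x) a =
      toEuclideanCLM (𝕜 := 𝕜) B (rowSlice x a) := by
  ext b
  simp [rowSlice, mulVec, dotProduct, Fintype.sum_prod_type, one_apply, ite_mul]

theorem colSlice_kronecker_one_apply (A : Matrix n n 𝕜) (x : EuclideanSpace 𝕜 (n × m)) (b : m) :
    colSlice (toEuclideanCLM (𝕜 := 𝕜) (A ⊗ₖ (1 : Matrix m m 𝕜)) x) b =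
      toEuclideanCLM (𝕜 := 𝕜) A (colSlice x b) := by
  ext a
  simp [colSlice, mulVec, dotProduct, Fintype.sum_prod_type, one_apply, mul_ite]

theorem colSlice_one_kronecker_diagonal_apply (d : m → 𝕜) (x : EuclideanSpace 𝕜 (n × m))
    (b : m) :
    colSlice (toEuclideanCLM (𝕜 := 𝕜) ((1 : Matrix n n 𝕜) ⊗ₖ diagonal d) x) b =
      d b • colSlice x b := by
  ext a
  simp [colSlice, mulVec, dotProduct, Fintype.sum_prod_type, one_apply, diagonal_apply, ite_mul]

end EuclideanSpace

namespace Matrix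

open EuclideanSpace

variable {𝕜 n m : Type*} [RCLike 𝕜] [Fintype n] [Fintype m] [DecidableEq n] [DecidableEq m]

theorem norm_toEuclideanCLM_apply_of_mem_unitaryGroup {U : Matrix n n 𝕜}
    (hU : U ∈ unitaryGroup n 𝕜) (x : EuclideanSpace 𝕜 n) :
    ‖toEuclideanCLM (𝕜 := 𝕜) U x‖ = ‖x‖ :=
  ContinuousLinearMap.norm_map_of_mem_unitary (Unitary.map_mem _ hU) x

theorem norm_toEuclideanCLM_one_kronecker_le (B : Matrix m m 𝕜) :
    ‖toEuclideanCLM (𝕜 := 𝕜) ((1 : Matrix n n 𝕜) ⊗ₖ B)‖ ≤ ‖toEuclideanCLM (𝕜 := 𝕜) B‖ :=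
  ContinuousLinearMap.opNorm_le_bound _ (norm_nonneg _) fun x =>
    norm_le_mul_of_rowSlice_le (norm_nonneg _) fun a => by
      rw [rowSlice_one_kronecker_apply]
      exact ContinuousLinearMap.le_opNorm _ _

theorem norm_one_kronecker_diagonal_sub_le {s l : m → 𝕜}
    (hsl : ∀ b, ‖s b - l b‖ ≤ |‖l b‖ - 1|) {U : Matrix n n 𝕜} (hU : U ∈ unitaryGroup n 𝕜)
    (φ : EuclideanSpace 𝕜 (n × m)) :
    ‖toEuclideanCLM (𝕜 := 𝕜) ((1 : Matrix n n 𝕜) ⊗ₖ diagonal s) φ -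
        toEuclideanCLM (𝕜 := 𝕜) ((1 : Matrix n n 𝕜) ⊗ₖ diagonal l) φ‖ ≤
      ‖toEuclideanCLM (𝕜 := 𝕜) ((1 : Matrix n n 𝕜) ⊗ₖ diagonal l) φ -
        toEuclideanCLM (𝕜 := 𝕜) (U ⊗ₖ (1 : Matrix m m 𝕜)) φ‖ :=
  norm_le_of_colSlice_le fun b => by
    rw [colSlice_sub, colSlice_sub, colSlice_one_kronecker_diagonal_apply,
      colSlice_one_kronecker_diagonal_apply, colSlice_kronecker_one_apply, ← sub_smul, norm_smul]
    calc ‖s b - l b‖ * ‖colSlice φ b‖ ≤ |‖l b‖ - 1| * ‖colSlice φ b‖ := by gcongr; exact hsl b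
      _ ≤ _ := abs_norm_sub_one_mul_norm_le _ (norm_toEuclideanCLM_apply_of_mem_unitaryGroup hU _)

theorem IsHermitian.norm_one_kronecker_cfc_sub_le {T : Matrix m m 𝕜} (hT : T.IsHermitian)
    {f : ℝ → ℝ} (hf : ∀ t, |f t - t| ≤ |(|t| - 1)|) {U : Matrix n n 𝕜}
    (hU : U ∈ unitaryGroup n 𝕜) (ψ : EuclideanSpace 𝕜 (n × m)) :
    ‖toEuclideanCLM (𝕜 := 𝕜) ((1 : Matrix n n 𝕜) ⊗ₖ hT.cfc f) ψ -
        toEuclideanCLM (𝕜 := 𝕜) ((1 : Matrix n n 𝕜) ⊗ₖ T) ψ‖ ≤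
      ‖toEuclideanCLM (𝕜 := 𝕜) ((1 : Matrix n n 𝕜) ⊗ₖ T) ψ -
        toEuclideanCLM (𝕜 := 𝕜) (U ⊗ₖ (1 : Matrix m m 𝕜)) ψ‖ := by
  set W : Matrix m m 𝕜 := ↑hT.eigenvectorUnitary
  set Q := toEuclideanCLM (𝕜 := 𝕜) ((1 : Matrix n n 𝕜) ⊗ₖ W)
  have hQ : Q ∈ unitary _ :=
    Unitary.map_mem _ (kronecker_mem_unitaryGroup (one_mem _) hT.eigenvectorUnitary.2)
  have hconj (M : Matrix m m 𝕜) :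
      toEuclideanCLM (𝕜 := 𝕜) ((1 : Matrix n n 𝕜) ⊗ₖ (W * M * star W)) =
        Q * toEuclideanCLM (𝕜 := 𝕜) ((1 : Matrix n n 𝕜) ⊗ₖ M) * star Q := by
    rw [one_kronecker_mul, one_kronecker_mul, map_mul, map_mul, ← map_star,
      star_eq_conjTranspose ((1 : Matrix n n 𝕜) ⊗ₖ W), conjTranspose_kronecker, conjTranspose_one,
      star_eq_conjTranspose]
  have hT' : toEuclideanCLM (𝕜 := 𝕜) ((1 : Matrix n n 𝕜) ⊗ₖ T) =
      Q * toEuclideanCLM (𝕜 := 𝕜)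
        ((1 : Matrix n n 𝕜) ⊗ₖ diagonal (RCLike.ofReal ∘ hT.eigenvalues)) * star Q := by
    conv_lhs => rw [hT.spectral_theorem, Unitary.conjStarAlgAut_apply, hconj]
  have hU' : toEuclideanCLM (𝕜 := 𝕜) (U ⊗ₖ (1 : Matrix m m 𝕜)) =
      Q * toEuclideanCLM (𝕜 := 𝕜) (U ⊗ₖ (1 : Matrix m m 𝕜)) * star Q := by
    rw [((commute_one_kronecker_kronecker_one U W).map toEuclideanCLM).eq, mul_assoc,
      Unitary.mul_star_self_of_mem hQ, mul_one]
  rw [IsHermitian.cfc, Unitary.conjStarAlgAut_apply, hconj, hT', hU',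
    ContinuousLinearMap.norm_conj_apply_sub_conj_apply hQ,
    ContinuousLinearMap.norm_conj_apply_sub_conj_apply hQ]
  refine norm_one_kronecker_diagonal_sub_le (fun b => ?_) hU _
  simp only [Function.comp_apply, ← RCLike.ofReal_sub, RCLike.norm_ofReal]
  exact hf _

end Matrix

noncomputable def signOrOne (t : ℝ) : ℝ :=
  if t = 0 then 1 else Real.sign t

theorem signOrOne_mul_self (t : ℝ) : signOrOne t * signOrOne t = 1 := by
  rcases lt_trichotomy t 0 with h | rfl | h
  · simp [signOrOne, h.ne, Real.sign_of_neg h]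
  · simp [signOrOne]
  · simp [signOrOne, h.ne', Real.sign_of_pos h]

theorem abs_signOrOne_sub (t : ℝ) : |signOrOne t - t| = |(|t| - 1)| := by
  rcases lt_trichotomy t 0 with h | rfl | h
  · rw [signOrOne, if_neg h.ne, Real.sign_of_neg h, abs_of_neg h]
    congr 1
    ring
  · simp [signOrOne]
  · rw [signOrOne, if_neg h.ne', Real.sign_of_pos h, abs_of_pos h, abs_sub_comm]

section Regularize

variable {d : ℕ} {T : Matrix (Fin d) (Fin d) ℂ}

theorem regularize_eq_cfc (hT : T.IsHermitian) : regularize hT = hT.cfc signOrOne := by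
  rw [regularize, IsHermitian.cfc, Unitary.conjStarAlgAut_apply]
  congr
  ext i
  simp only [Function.comp_apply, signOrOne]
  split_ifs <;> simp

theorem regularize_mem_unitaryGroup (hT : T.IsHermitian) :
    regularize hT ∈ unitaryGroup (Fin d) ℂ := by
  rw [regularize_eq_cfc, ← hT.cfc_eq]
  exact (cfc_unitary_iff _ _ hT.isSelfAdjoint (T.finite_real_spectrum.continuousOn _)).2
    fun t _ => signOrOne_mul_self t

theorem Matrix.IsHermitian.norm_one_kronecker_regularize_sub_le {dA : ℕ} (hT : T.IsHermitian)
    {U : Matrix (Fin dA) (Fin dA) ℂ} (hU : U ∈ unitaryGroup (Fin dA) ℂ)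
    (ψ : EuclideanSpace ℂ (Fin dA × Fin d)) :
    ‖toEuclideanCLM (𝕜 := ℂ) ((1 : Matrix (Fin dA) (Fin dA) ℂ) ⊗ₖ regularize hT) ψ -
        toEuclideanCLM (𝕜 := ℂ) ((1 : Matrix (Fin dA) (Fin dA) ℂ) ⊗ₖ T) ψ‖ ≤
      ‖toEuclideanCLM (𝕜 := ℂ) ((1 : Matrix (Fin dA) (Fin dA) ℂ) ⊗ₖ T) ψ -
        toEuclideanCLM (𝕜 := ℂ) (U ⊗ₖ (1 : Matrix (Fin d) (Fin d) ℂ)) ψ‖ := by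
  rw [regularize_eq_cfc]
  exact hT.norm_one_kronecker_cfc_sub_le (fun t => (abs_signOrOne_sub t).le) hU ψ

end Regularize

/-- if Hermitian `T₁, T₂` (on Bob's side) are `ε`-close on `ψ` to unitaries
`U₁, U₂` (on Alice's side), then the anticommutator of the regularized unitaries `T̂₁, T̂₂`
is `(6 + ‖T₁‖ + ‖T₂‖)ε`-close on `ψ` to the anticommutator of `T₁, T₂`. -/
theorem regularized_anticommutator_close {dA dB : ℕ}
    (ψ : EuclideanSpace ℂ (Fin dA × Fin dB))
    (T₁ T₂ : Matrix (Fin dB) (Fin dB) ℂ) (hT₁ : T₁.IsHermitian) (hT₂ : T₂.IsHermitian)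
    (U₁ U₂ : Matrix (Fin dA) (Fin dA) ℂ)
    (hU₁ : U₁ ∈ Matrix.unitaryGroup (Fin dA) ℂ) (hU₂ : U₂ ∈ Matrix.unitaryGroup (Fin dA) ℂ)
    (ε : ℝ)
    (h₁ : ‖Matrix.toEuclideanLin ((1 : Matrix (Fin dA) (Fin dA) ℂ) ⊗ₖ T₁) ψ -
          Matrix.toEuclideanLin (U₁ ⊗ₖ (1 : Matrix (Fin dB) (Fin dB) ℂ)) ψ‖ ≤ ε)
    (h₂ : ‖Matrix.toEuclideanLin ((1 : Matrix (Fin dA) (Fin dA) ℂ) ⊗ₖ T₂) ψ -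
          Matrix.toEuclideanLin (U₂ ⊗ₖ (1 : Matrix (Fin dB) (Fin dB) ℂ)) ψ‖ ≤ ε) :
    ‖Matrix.toEuclideanLin ((1 : Matrix (Fin dA) (Fin dA) ℂ) ⊗ₖ
          (regularize hT₁ * regularize hT₂ + regularize hT₂ * regularize hT₁)) ψ -
        Matrix.toEuclideanLin ((1 : Matrix (Fin dA) (Fin dA) ℂ) ⊗ₖ (T₁ * T₂ + T₂ * T₁)) ψ‖ ≤
      (6 + ‖Matrix.toEuclideanCLM (𝕜 := ℂ) T₁‖ + ‖Matrix.toEuclideanCLM (𝕜 := ℂ) T₂‖) * ε := by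
  have hε : 0 ≤ ε := (norm_nonneg _).trans h₁
  have h1A := one_mem (unitaryGroup (Fin dA) ℂ)
  have h1B := one_mem (unitaryGroup (Fin dB) ℂ)
  have hR₁ := kronecker_mem_unitaryGroup h1A (regularize_mem_unitaryGroup hT₁)
  have hR₂ := kronecker_mem_unitaryGroup h1A (regularize_mem_unitaryGroup hT₂)
  have hV₁ := kronecker_mem_unitaryGroup hU₁ h1B
  have hV₂ := kronecker_mem_unitaryGroup hU₂ h1B
  simp only [← coe_toEuclideanCLM_eq_toEuclideanLin, ContinuousLinearMap.coe_coe] at h₁ h₂ ⊢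
  simp only [kronecker_add, one_kronecker_mul, map_add, map_mul]
  refine (ContinuousLinearMap.norm_anticommutator_apply_sub_le
    (norm_toEuclideanCLM_apply_of_mem_unitaryGroup hR₁)
    (norm_toEuclideanCLM_apply_of_mem_unitaryGroup hR₂)
    (norm_toEuclideanCLM_apply_of_mem_unitaryGroup hV₁)
    (norm_toEuclideanCLM_apply_of_mem_unitaryGroup hV₂)
    ((commute_one_kronecker_kronecker_one _ _).map _)
    ((commute_one_kronecker_kronecker_one _ _).map _)
    ((commute_one_kronecker_kronecker_one _ _).map _)
    ((commute_one_kronecker_kronecker_one _ _).map _)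
    ((hT₁.norm_one_kronecker_regularize_sub_le hU₁ ψ).trans h₁)
    ((hT₂.norm_one_kronecker_regularize_sub_le hU₂ ψ).trans h₂) h₁ h₂).trans ?_
  gcongr <;> exact norm_toEuclideanCLM_one_kronecker_le _
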